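/- arXiv:1301.1390 — 8 statements merged into one kernel-verified Lean document; each statement's English description precedes it below -/
import Mathlib

section
/- Let U be an unfounded set of a ground HEX-program Π with respect to a complete assignment A, and let C ⊆ U be a cut of U, i.e., (i) no atom of C has an incoming or internal e-edge from any atom of U, and (ii) there are no ordinary dependency edges between C and U \ C in either direction. Then U \ C is an unfounded set of Π with respect to A. -/
/-- A ground external atom: a set of input atoms and an oracle function whose
value depends only on the assignment restricted to the input atoms. -/
structure ExtAtom (Atom : Type) where
  inputs : Finset Atom
  eval : (Atom → Bool) → Bool
  dep : ∀ A B : Atom → Bool, (∀ a ∈ inputs, A a = B a) → eval A = eval B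

/-- A ground HEX-rule: head, ordinary positive body, ordinary negative body,
positive external body, negative external body. -/
structure Rule (Atom : Type) where
  head : Finset Atom
  posOrd : Finset Atom
  negOrd : Finset Atom
  posExt : List (ExtAtom Atom)
  negExt : List (ExtAtom Atom)

/-- A ground HEX-program is a set of rules (finiteness is assumed explicitly). -/
abbrev Program (Atom : Type) := Set (Rule Atom)

variable {Atom : Type} [DecidableEq Atom]

/-- The ordinary atoms occurring in a rule. -/
def Rule.atoms (r : Rule Atom) : Finset Atom :=
  r.head ∪ r.posOrd ∪ r.negOrd ∪
    ((r.posExt ++ r.negExt).foldr (fun e s => e.inputs ∪ s) ∅)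

/-- The ordinary atoms `A(Π)` occurring in a program. -/
def progAtoms (P : Program Atom) : Set Atom := ⋃ r ∈ P, (r.atoms : Set Atom)

/-- `A ∪̇¬ X`: set all atoms of `X` to false in `A`. -/
def unplug (A : Atom → Bool) (X : Finset Atom) : Atom → Bool :=
  fun a => A a && !(decide (a ∈ X))

/-- All body literals of `r` are true wrt. the complete assignment `B`. -/
def Rule.bodyTrueAt (r : Rule Atom) (B : Atom → Bool) : Prop :=
  (∀ a ∈ r.posOrd, B a = true) ∧ (∀ a ∈ r.negOrd, B a = false) ∧
  (∀ e ∈ r.posExt, e.eval B = true) ∧ (∀ e ∈ r.negExt, e.eval B = false)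

/-- Some body literal of `r` is false wrt. the complete assignment `B`. -/
def Rule.bodyFalseAt (r : Rule Atom) (B : Atom → Bool) : Prop :=
  (∃ a ∈ r.posOrd, B a = false) ∨ (∃ a ∈ r.negOrd, B a = true) ∨
  (∃ e ∈ r.posExt, e.eval B = false) ∨ (∃ e ∈ r.negExt, e.eval B = true)

/-- `X` is an unfounded set of `P` wrt. the complete assignment `A`
(Definition of unfounded sets for HEX-programs). -/
def isUnfounded (P : Program Atom) (A : Atom → Bool) (X : Finset Atom) : Prop :=
  ∀ r ∈ P, (r.head ∩ X).Nonempty →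
    r.bodyFalseAt A ∨ r.bodyFalseAt (unplug A X) ∨
    ∃ h ∈ r.head, h ∉ X ∧ A h = true

/-- `A` is a (complete) model of `P`. -/
def isModel (A : Atom → Bool) (P : Program Atom) : Prop :=
  ∀ r ∈ P, r.bodyTrueAt A → ∃ h ∈ r.head, A h = true

/-- Ordinary dependency `a → b`. -/
def ordDep (P : Program Atom) (a b : Atom) : Prop :=
  ∃ r ∈ P, a ∈ r.head ∧ b ∈ r.posOrd

/-- External dependency (e-edge) `a →ₑ b`. -/
def eDep (P : Program Atom) (a b : Atom) : Prop :=
  ∃ r ∈ P, a ∈ r.head ∧ ∃ e ∈ r.posExt ++ r.negExt, b ∈ e.inputs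

/-- The relation `→ᵈ = → ∪ →⁻¹ ∪ →ₑ`. -/
def dDep (P : Program Atom) (a b : Atom) : Prop :=
  ordDep P a b ∨ ordDep P b a ∨ eDep P a b

/-- `C` is a cut of the unfounded set `U`: `C ⊆ U`, `C` has no incoming or
internal e-edges from `U`, and there are no ordinary edges between `C` and
`U \ C` in either direction. -/
def isCut (P : Program Atom) (U C : Finset Atom) : Prop :=
  C ⊆ U ∧ (∀ a ∈ C, ∀ b ∈ U, ¬ eDep P b a) ∧
  (∀ a ∈ C, ∀ b ∈ U \ C, ¬ ordDep P a b ∧ ¬ ordDep P b a)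

/-- Some body literal of the rule corresponding to `r` in the guessing program
`Π̂` is false wrt. `B` extended to the compatible extension `Â` of `A`:
ordinary literals are evaluated at `B`, while external replacement atoms obtain
(by compatibility) the oracle value at `A`. -/
def Rule.bodyFalseHat (r : Rule Atom) (A B : Atom → Bool) : Prop :=
  (∃ a ∈ r.posOrd, B a = false) ∨ (∃ a ∈ r.negOrd, B a = true) ∨
  (∃ e ∈ r.posExt, e.eval A = false) ∨ (∃ e ∈ r.negExt, e.eval A = true)

/-- `X` (a set of ordinary atoms) is an unfounded set of the guessing program
`Π̂` wrt. the compatible extension `Â` of `A`.  Since `X` contains only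
ordinary atoms and the guessing rules have only replacement atoms in their
heads, this unfolds to the condition below, where replacement atoms keep their
(compatible) value under `Â ∪̇¬ X`. -/
def isUnfoundedHat (P : Program Atom) (A : Atom → Bool) (X : Finset Atom) : Prop :=
  ∀ r ∈ P, (r.head ∩ X).Nonempty →
    r.bodyFalseHat A A ∨ r.bodyFalseHat A (unplug A X) ∨
    ∃ h ∈ r.head, h ∉ X ∧ A h = true

/-- The set `S` contains a cycle under `→ᵈ` that uses at least one e-edge. -/
def hasECycleIn (P : Program Atom) (S : Set Atom) : Prop :=
  ∃ (n : ℕ) (c : ℕ → Atom),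
    (∀ i ≤ n, dDep P (c i) (c (i+1))) ∧ c 0 = c (n+1) ∧
    (∀ i ≤ n+1, c i ∈ S) ∧ ∃ i ≤ n, eDep P (c i) (c (i+1))

/-- `a` is a cyclic input atom: some `b` with `b →ₑ a` and a path from `a`
to `b` under `→ᵈ`. -/
def cyclicInput (P : Program Atom) (a : Atom) : Prop :=
  ∃ b, eDep P b a ∧ Relation.ReflTransGen (dDep P) a b

/-- The FLP-reduct `fΠ^A`. -/
def flpReduct (P : Program Atom) (A : Atom → Bool) : Program Atom :=
  { r ∈ P | r.bodyTrueAt A }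

/-- `A₁ ≤_Π A₂`. -/
def leP (P : Program Atom) (A₁ A₂ : Atom → Bool) : Prop :=
  ∀ a ∈ progAtoms P, A₁ a = true → A₂ a = true

/-- `A` is an answer set of `P`: a `≤_Π`-minimal model of the FLP-reduct. -/
def isAnswerSet (P : Program Atom) (A : Atom → Bool) : Prop :=
  isModel A (flpReduct P A) ∧
  ∀ A' : Atom → Bool, isModel A' (flpReduct P A) → leP P A' A → leP P A A'

/-- The dependency relation `→ ∪ →ₑ` used for strongly connected components. -/
def dep (P : Program Atom) (a b : Atom) : Prop := ordDep P a b ∨ eDep P a b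

/-- Mutual reachability under `→ ∪ →ₑ`. -/
def sameSCC (P : Program Atom) (a b : Atom) : Prop :=
  Relation.ReflTransGen (dep P) a b ∧ Relation.ReflTransGen (dep P) b a

/-- The strongly connected component of `a` under `→ ∪ →ₑ`. -/
def scc (P : Program Atom) (a : Atom) : Set Atom := { b | sameSCC P a b }

/-- The subprogram `Π_C` associated with a component `C`. -/
def subprog (P : Program Atom) (C : Set Atom) : Program Atom :=
  { r ∈ P | ∃ h ∈ r.head, h ∈ C }

/-!
Shrinking `U` to `U \ C` changes `A ∪̇¬ U` only on `C`, and only by making atoms true. A rule with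
a head atom in `U \ C` has, by the cut conditions, no positive ordinary body atom and no external
input atom in `C`; so a body literal that is false under `A ∪̇¬ U` stays false under
`A ∪̇¬ (U \ C)`.
-/

theorem unplug_sdiff_of_notMem (A : Atom → Bool) (U : Finset Atom) {C : Finset Atom} {a : Atom}
    (ha : a ∉ C) : unplug A (U \ C) a = unplug A U a := by
  simp [unplug, ha]

theorem unplug_eq_true_of_subset (A : Atom → Bool) {X Y : Finset Atom} (hYX : Y ⊆ X) {a : Atom}
    (ha : unplug A X a = true) : unplug A Y a = true := by
  simp only [unplug, Bool.and_eq_true, Bool.not_eq_true', decide_eq_false_iff_not] at ha ⊢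
  exact ⟨ha.1, fun h => ha.2 (hYX h)⟩

theorem Rule.bodyFalseAt_of_agree {α : Type} (r : Rule α) {B B' : α → Bool}
    (hpos : ∀ a ∈ r.posOrd, B' a = B a)
    (hneg : ∀ a ∈ r.negOrd, B a = true → B' a = true)
    (hext : ∀ e ∈ r.posExt ++ r.negExt, ∀ a ∈ e.inputs, B' a = B a)
    (hr : r.bodyFalseAt B) : r.bodyFalseAt B' := by
  have heval : ∀ e ∈ r.posExt ++ r.negExt, e.eval B' = e.eval B := fun e he =>
    e.dep _ _ (hext e he)
  rcases hr with ⟨a, ha, hv⟩ | ⟨a, ha, hv⟩ | ⟨e, he, hv⟩ | ⟨e, he, hv⟩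
  · exact Or.inl ⟨a, ha, (hpos a ha).trans hv⟩
  · exact Or.inr (Or.inl ⟨a, ha, hneg a ha hv⟩)
  · exact Or.inr (Or.inr (Or.inl ⟨e, he, (heval e (List.mem_append_left _ he)).trans hv⟩))
  · exact Or.inr (Or.inr (Or.inr ⟨e, he, (heval e (List.mem_append_right _ he)).trans hv⟩))

namespace isCut

variable {P : Program Atom} {U C : Finset Atom} {r : Rule Atom} {h a : Atom}

theorem notMem_of_mem_posOrd (hC : isCut P U C) (hr : r ∈ P) (hh : h ∈ r.head)
    (hhUC : h ∈ U \ C) (ha : a ∈ r.posOrd) : a ∉ C := fun haC =>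
  (hC.2.2 a haC h hhUC).2 ⟨r, hr, hh, ha⟩

theorem notMem_of_mem_inputs (hC : isCut P U C) (hr : r ∈ P) (hh : h ∈ r.head) (hhU : h ∈ U)
    {e : ExtAtom Atom} (he : e ∈ r.posExt ++ r.negExt) (ha : a ∈ e.inputs) : a ∉ C := fun haC =>
  hC.2.1 a haC h hhU ⟨r, hr, hh, e, he, ha⟩

end isCut

theorem unfounded_set_reduction_general (P : Program Atom)
    (A : Atom → Bool) (U C : Finset Atom)
    (hU : isUnfounded P A U) (hC : isCut P U C) :
    isUnfounded P A (U \ C) := by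
  intro r hr ⟨h, hh⟩
  obtain ⟨hhead, hhUC⟩ := Finset.mem_inter.1 hh
  have hhU : h ∈ U := (Finset.mem_sdiff.1 hhUC).1
  rcases hU r hr ⟨h, Finset.mem_inter.2 ⟨hhead, hhU⟩⟩ with hA | hAU | ⟨h', hh', hh'U, hh'A⟩
  · exact Or.inl hA
  · refine Or.inr (Or.inl (r.bodyFalseAt_of_agree ?_ ?_ ?_ hAU))
    · exact fun a ha => unplug_sdiff_of_notMem A U (hC.notMem_of_mem_posOrd hr hhead hhUC ha)
    · exact fun a _ => unplug_eq_true_of_subset A Finset.sdiff_subset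
    · exact fun e he a ha =>
        unplug_sdiff_of_notMem A U (hC.notMem_of_mem_inputs hr hhead hhU he ha)
  · exact Or.inr (Or.inr ⟨h', hh', fun hmem => hh'U (Finset.mem_sdiff.1 hmem).1, hh'A⟩)

/-- Unfounded Set Reduction Lemma: removing a cut from an unfounded set
yields an unfounded set. -/
theorem unfounded_set_reduction (P : Program Atom) (hP : P.Finite)
    (A : Atom → Bool) (U C : Finset Atom)
    (hU : isUnfounded P A U) (hC : isCut P U C) :
    isUnfounded P A (U \ C) :=
  unfounded_set_reduction_general P A U C hU hC
end

section
/- Let Π be a ground HEX-program, A a complete assignment on the atoms of Π, Π̂ its guessing program obtained by replacing each external atom by its replacement atom and adding guessing rules for replacement atoms, and Â the compatible extension of A. If U is an unfounded set of Π with respect to A such that there are no atoms x, y ∈ U with x →ₑ y, then U is an unfounded set of Π̂ with respect to Â. -/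
variable {Atom : Type} [DecidableEq Atom]

/- An unfounded set of `Π` becomes one of `Π̂` once the external atoms are frozen at their values
under `A`. The only risk is a rule with a head in `U` whose external atoms change value under
`A ∪̇¬ U`; but such a rule has all external inputs outside `U`, since an input in `U` would be an
e-edge inside `U`, and an oracle only reads its inputs. -/

theorem ExtAtom.eval_unplug_of_disjoint (e : ExtAtom Atom) (A : Atom → Bool) {X : Finset Atom}
    (hX : Disjoint e.inputs X) : e.eval (unplug A X) = e.eval A :=
  e.dep _ _ fun a ha => by simp [unplug, Finset.disjoint_left.mp hX ha]

theorem Rule.bodyFalseHat_iff_bodyFalseAt {α : Type} {r : Rule α} {A B : α → Bool}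
    (hext : ∀ e ∈ r.posExt ++ r.negExt, e.eval B = e.eval A) :
    r.bodyFalseHat A B ↔ r.bodyFalseAt B :=
  or_congr_right <| or_congr_right <| or_congr
    (exists_congr fun e => and_congr_right fun he => by rw [hext e (List.mem_append_left _ he)])
    (exists_congr fun e => and_congr_right fun he => by rw [hext e (List.mem_append_right _ he)])

theorem disjoint_inputs_of_forall_not_eDep {α : Type} {P : Program α} {U : Finset α}
    (hnoe : ∀ x ∈ U, ∀ y ∈ U, ¬ eDep P x y) {r : Rule α} (hr : r ∈ P) {h : α}
    (hhead : h ∈ r.head) (hU : h ∈ U) : ∀ e ∈ r.posExt ++ r.negExt, Disjoint e.inputs U :=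
  fun e he => Finset.disjoint_left.mpr fun b hb hbU =>
    hnoe h hU b hbU ⟨r, hr, hhead, e, he, hb⟩

theorem ea_input_unfoundedness_general (P : Program Atom)
    (A : Atom → Bool) (U : Finset Atom)
    (hU : isUnfounded P A U)
    (hnoe : ∀ x ∈ U, ∀ y ∈ U, ¬ eDep P x y) :
    isUnfoundedHat P A U := by
  intro r hr ⟨h, hh⟩
  obtain ⟨hhead, hhU⟩ := Finset.mem_inter.mp hh
  have hext : ∀ e ∈ r.posExt ++ r.negExt, e.eval (unplug A U) = e.eval A := fun e he =>
    e.eval_unplug_of_disjoint A (disjoint_inputs_of_forall_not_eDep hnoe hr hhead hhU e he)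
  rcases hU r hr ⟨h, hh⟩ with hA | hunplug | hfounded
  · exact Or.inl hA
  · exact Or.inr (Or.inl ((Rule.bodyFalseHat_iff_bodyFalseAt hext).mpr hunplug))
  · exact Or.inr (Or.inr hfounded)

/-- EA-Input Unfoundedness: an unfounded set of `Π` without internal e-edges
is an unfounded set of the guessing program `Π̂` wrt. the compatible `Â`. -/
theorem ea_input_unfoundedness (P : Program Atom) (hP : P.Finite)
    (A : Atom → Bool) (U : Finset Atom)
    (hU : isUnfounded P A U)
    (hnoe : ∀ x ∈ U, ∀ y ∈ U, ¬ eDep P x y) :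
    isUnfoundedHat P A U :=
  ea_input_unfoundedness_general P A U hU hnoe
end

section
/- Let G = (V, E_o ∪ E_e) be a finite directed graph whose edge set is partitioned into ordinary edges E_o and e-edges E_e, and suppose E_e ≠ ∅. Let →ᵈ = E_o ∪ E_o⁻¹ ∪ E_e. If G contains no cycle under →ᵈ that uses at least one e-edge, then there exists a vertex u with an outgoing e-edge such that the set R(u) of vertices reachable from u using only edges from E_o ∪ E_o⁻¹ has no incoming e-edge, i.e., there is no (b, a) ∈ E_e with a ∈ R(u). -/
/-! A vertex `w` with an e-edge `w → a` from which `→ᵈ` leads on to `u` is "e-before" `u`. Without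
e-cycles this is a strict order on the finite vertex set, so the nonempty set of sources of e-edges
has a minimal element `u`. An e-edge `b → a` into `R(u)` would make `b`, itself a source, e-before
`u`, since `Eo ∪ Eo⁻¹`-paths can be walked backwards. -/

open Relation

theorem Relation.ReflTransGen.exists_seq {α : Type*} {r : α → α → Prop} {a b : α}
    (h : ReflTransGen r a b) :
    ∃ n, ∃ c : ℕ → α, c 0 = a ∧ c n = b ∧ ∀ i < n, r (c i) (c (i + 1)) := by
  induction h using Relation.ReflTransGen.head_induction_on with
  | refl => exact ⟨0, fun _ => b, rfl, rfl, by simp⟩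
  | @head a _ hstep _ ih =>
    obtain ⟨n, c, rfl, hcn, hc⟩ := ih
    refine ⟨n + 1, fun | 0 => a | i + 1 => c i, rfl, hcn, ?_⟩
    rintro (_ | i) hi
    · exact hstep
    · exact hc i (by omega)

section

variable {V : Type*} (Eo Ee : V → V → Prop)

/-- The relation `→ᵈ`. -/
def DStep (x y : V) : Prop := Eo x y ∨ Eo y x ∨ Ee x y

def IsECycle (n : ℕ) (c : ℕ → V) : Prop :=
  (∀ i ≤ n, DStep Eo Ee (c i) (c (i + 1))) ∧ c 0 = c (n + 1) ∧ ∃ i ≤ n, Ee (c i) (c (i + 1))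

def EBefore (w u : V) : Prop := ∃ a, Ee w a ∧ ReflTransGen (DStep Eo Ee) a u

variable {Eo Ee}

theorem EBefore.trans {u v w : V} (huv : EBefore Eo Ee u v) (hvw : EBefore Eo Ee v w) :
    EBefore Eo Ee u w := by
  obtain ⟨a, hua, hav⟩ := huv
  obtain ⟨b, hvb, hbw⟩ := hvw
  exact ⟨a, hua, hav.trans (hbw.head (Or.inr (Or.inr hvb)))⟩

theorem exists_isECycle_of_eBefore_self {u : V} (h : EBefore Eo Ee u u) :
    ∃ n c, IsECycle Eo Ee n c := by
  obtain ⟨a, hua, hau⟩ := h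
  obtain ⟨n, c, rfl, hcn, hc⟩ := hau.exists_seq
  refine ⟨n, fun | 0 => u | i + 1 => c i, ⟨?_, hcn.symm, 0, n.zero_le, hua⟩⟩
  rintro (_ | i) hi
  · exact Or.inr (Or.inr hua)
  · exact hc i (by omega)

theorem wellFounded_eBefore [Finite V] (h : ¬ ∃ n c, IsECycle Eo Ee n c) :
    WellFounded (EBefore Eo Ee) :=
  haveI : IsTrans V (EBefore Eo Ee) := ⟨fun _ _ _ => EBefore.trans⟩
  haveI : Std.Irrefl (EBefore Eo Ee) := ⟨fun _ hu => h (exists_isECycle_of_eBefore_self hu)⟩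
  Finite.wellFounded_of_trans_of_irrefl _

theorem reflTransGen_dStep_of_symmGen {u a : V} (h : ReflTransGen (SymmGen Eo) u a) :
    ReflTransGen (DStep Eo Ee) a u :=
  ReflTransGen.mono (fun _ _ hxy => hxy.elim Or.inl (Or.inr ∘ Or.inl)) _ _ (symm h)

end

/-- In a finite graph with ordinary edges `Eo` and e-edges `Ee ≠ ∅`, if there
is no cycle under `→ᵈ = Eo ∪ Eo⁻¹ ∪ Ee` using an e-edge, then some vertex `u`
with an outgoing e-edge has a reachable set `R(u)` (under `Eo ∪ Eo⁻¹`) without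
incoming e-edges. -/
theorem exists_vertex_with_eedge_free_reachable_set
    {V : Type} [Fintype V] (Eo Ee : V → V → Prop)
    (hne : ∃ x y, Ee x y)
    (hnocycle : ¬ ∃ (n : ℕ) (c : ℕ → V),
      (∀ i ≤ n, Eo (c i) (c (i+1)) ∨ Eo (c (i+1)) (c i) ∨ Ee (c i) (c (i+1))) ∧
      c 0 = c (n+1) ∧ ∃ i ≤ n, Ee (c i) (c (i+1))) :
    ∃ u, (∃ v, Ee u v) ∧
      ∀ a, Relation.ReflTransGen (fun x y => Eo x y ∨ Eo y x) u a →
        ∀ b, ¬ Ee b a := by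
  obtain ⟨u, hu, hmin⟩ := (wellFounded_eBefore (Eo := Eo) hnocycle).has_min {u | ∃ v, Ee u v} hne
  exact ⟨u, hu, fun a hua b hba =>
    hmin b ⟨a, hba⟩ ⟨a, hba, reflTransGen_dStep_of_symmGen hua⟩⟩
end

section
/- Let Π be a ground HEX-program whose atom dependency graph contains no e-cycle under →ᵈ = → ∪ →⁻¹ ∪ →ₑ, let A be a complete model of Π with compatible extension Â over the guessing program Π̂. If Â intersects no nonempty unfounded set of Π̂ wrt. Â, then A is unfounded-free for Π, i.e., Aᵀ ∩ X = ∅ for every unfounded set X of Π wrt. A. -/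
variable {Atom : Type} [DecidableEq Atom]

/-!
Restricting an unfounded set of `Π` to its true atoms keeps it unfounded, so it suffices to
refute a nonempty unfounded set `U` of true atoms. Pick `x ∈ U` whose part of `U` reachable under
`→ ∪ →ₑ` is smallest, and let `D` be the atoms of `U` reachable from `x` by ordinary edges. An
e-edge from `D` to some `b ∈ U` is impossible: `b` reaches less of `U` than `x`, since a path from
`b` back to `x` would close an e-cycle. So the rules with head in `D` see no external input in `U`
and no positive ordinary body atom in `U \ D`; hence `D` is unfounded for `Π̂` wrt. `Â`, and being
nonempty and true it contradicts the hypothesis on `Â`.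
-/

open Relation

lemma Relation.ReflTransGen.exists_walk {α : Type*} {R : α → α → Prop} {a b : α}
    (h : ReflTransGen R a b) :
    ∃ n, ∃ c : ℕ → α, c 0 = a ∧ c n = b ∧ ∀ i < n, R (c i) (c (i + 1)) := by
  induction h using ReflTransGen.head_induction_on with
  | refl => exact ⟨0, fun _ => b, rfl, rfl, by omega⟩
  | @head a a' haa' _ ih =>
    obtain ⟨n, c, hc0, hcn, hstep⟩ := ih
    refine ⟨n + 1, fun | 0 => a | i + 1 => c i, rfl, hcn, ?_⟩
    rintro (_ | i) hi
    · show R a (c 0)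
      rwa [hc0]
    · exact hstep i (by omega)

omit [DecidableEq Atom] in
lemma dDep_of_dep {P : Program Atom} {a b : Atom} (h : dep P a b) : dDep P a b :=
  h.imp_right Or.inr

omit [DecidableEq Atom] in
lemma hasECycleIn_univ_of_eDep_of_reflTransGen {P : Program Atom} {a b : Atom}
    (he : eDep P a b) (hp : ReflTransGen (dDep P) b a) :
    hasECycleIn P Set.univ := by
  obtain ⟨n, c, hc0, hcn, hstep⟩ := hp.exists_walk
  refine ⟨n, fun | 0 => a | i + 1 => c i, ?_, hcn.symm, fun _ _ => trivial, 0, n.zero_le, ?_⟩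
  · rintro (_ | i) hi
    · exact Or.inr (Or.inr (hc0.symm ▸ he : eDep P a (c 0)))
    · exact hstep i (by omega)
  · exact (hc0.symm ▸ he : eDep P a (c 0))

lemma unplug_filter_true (A : Atom → Bool) (X : Finset Atom) :
    unplug A (X.filter (A · = true)) = unplug A X := by
  funext x
  cases hx : A x <;> simp [unplug, hx]

lemma isUnfounded.filter_true {P : Program Atom} {A : Atom → Bool} {X : Finset Atom}
    (hX : isUnfounded P A X) : isUnfounded P A (X.filter (A · = true)) := by
  rintro r hr ⟨h, hh⟩
  simp only [Finset.mem_inter, Finset.mem_filter] at hh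
  rw [unplug_filter_true]
  rcases hX r hr ⟨h, Finset.mem_inter.2 ⟨hh.1, hh.2.1⟩⟩ with hA | hAX | ⟨h', hh', hh'X, hAh'⟩
  · exact Or.inl hA
  · exact Or.inr (Or.inl hAX)
  · exact Or.inr (Or.inr ⟨h', hh', fun h'Y => hh'X (Finset.mem_of_mem_filter _ h'Y), hAh'⟩)

lemma isUnfounded.isUnfoundedHat_of_subset {P : Program Atom} {A : Atom → Bool}
    {U D : Finset Atom} (hU : isUnfounded P A U) (hDU : D ⊆ U)
    (hord : ∀ a ∈ D, ∀ b ∈ U, ordDep P a b → b ∈ D)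
    (hext : ∀ a ∈ D, ∀ b ∈ U, ¬ eDep P a b) :
    isUnfoundedHat P A D := by
  rintro r hr ⟨h, hh⟩
  rw [Finset.mem_inter] at hh
  have heval : ∀ e ∈ r.posExt ++ r.negExt, e.eval (unplug A U) = e.eval A := fun e he =>
    e.dep _ _ fun x hx => by
      have hxU : x ∉ U := fun hxU => hext h hh.2 x hxU ⟨r, hr, hh.1, e, he, hx⟩
      simp [unplug, hxU]
  rcases hU r hr ⟨h, Finset.mem_inter.2 ⟨hh.1, hDU hh.2⟩⟩ with hA | hAU | ⟨h', hh', hh'U, hAh'⟩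
  · exact Or.inl hA
  · refine Or.inr (Or.inl ?_)
    rcases hAU with ⟨x, hx, hfx⟩ | ⟨x, hx, htx⟩ | ⟨e, he, hfe⟩ | ⟨e, he, hte⟩
    · refine Or.inl ⟨x, hx, ?_⟩
      by_cases hxU : x ∈ U
      · simp [unplug, hord h hh.2 x hxU ⟨r, hr, hh.1, hx⟩]
      · have hxD : x ∉ D := fun hxD => hxU (hDU hxD)
        simpa [unplug, hxU, hxD] using hfx
    · refine Or.inr (Or.inl ⟨x, hx, ?_⟩)
      simp only [unplug, Bool.and_eq_true, Bool.not_eq_true', decide_eq_false_iff_not] at htx ⊢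
      exact ⟨htx.1, fun hxD => htx.2 (hDU hxD)⟩
    · exact Or.inr (Or.inr (Or.inl ⟨e, he, heval e (List.mem_append_left _ he) ▸ hfe⟩))
    · exact Or.inr (Or.inr (Or.inr ⟨e, he, heval e (List.mem_append_right _ he) ▸ hte⟩))
  · exact Or.inr (Or.inr ⟨h', hh', fun h'D => hh'U (hDU h'D), hAh'⟩)

omit [DecidableEq Atom] in
lemma exists_ordClosed_eFree_subset {P : Program Atom}
    (hnoc : ¬ hasECycleIn P Set.univ) {U : Finset Atom} (hU : U.Nonempty) :
    ∃ D ⊆ U, D.Nonempty ∧ (∀ a ∈ D, ∀ b ∈ U, ordDep P a b → b ∈ D) ∧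
      ∀ a ∈ D, ∀ b ∈ U, ¬ eDep P a b := by
  classical
  let reach : Atom → Finset Atom := fun x => U.filter (ReflTransGen (dep P) x)
  obtain ⟨x, hxU, hmin⟩ := U.exists_min_image (fun x => (reach x).card) hU
  refine ⟨U.filter (ReflTransGen (ordDep P) x), Finset.filter_subset _ _,
    ⟨x, Finset.mem_filter.2 ⟨hxU, .refl⟩⟩, ?_, ?_⟩
  · intro a ha b hb hab
    exact Finset.mem_filter.2 ⟨hb, (Finset.mem_filter.1 ha).2.tail hab⟩
  · intro a ha b hb hab
    have hxa : ReflTransGen (dep P) x a :=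
      ReflTransGen.mono (fun _ _ => Or.inl) _ _ (Finset.mem_filter.1 ha).2
    have hbx : ¬ ReflTransGen (dep P) b x := fun hbx =>
      hnoc (hasECycleIn_univ_of_eDep_of_reflTransGen hab
        (ReflTransGen.mono (fun _ _ => dDep_of_dep) _ _ (hbx.trans hxa)))
    have hreach : reach b ⊂ reach x := by
      refine Finset.ssubset_iff_of_subset ?_ |>.2 ⟨x, ?_, ?_⟩
      · exact Finset.monotone_filter_right _ fun y _ hby => (hxa.tail (Or.inr hab)).trans hby
      · exact Finset.mem_filter.2 ⟨hxU, .refl⟩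
      · exact fun hxb => hbx (Finset.mem_filter.1 hxb).2
    exact (hmin b hb).not_gt (Finset.card_lt_card hreach)

theorem no_ecycle_unfounded_free_general (P : Program Atom)
    (A : Atom → Bool)
    (hnoc : ¬ hasECycleIn P (Set.univ : Set Atom))
    (hhat : ∀ U : Finset Atom, U.Nonempty → ↑U ⊆ progAtoms P →
      isUnfoundedHat P A U → ∀ a ∈ U, A a = false) :
    ∀ X : Finset Atom, ↑X ⊆ progAtoms P → isUnfounded P A X →
      ∀ a ∈ X, A a = false := by
  intro X hX hXunf a haX
  by_contra haA
  set U := X.filter (A · = true)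
  have haU : a ∈ U := Finset.mem_filter.2 ⟨haX, by simpa using haA⟩
  obtain ⟨D, hDU, ⟨d, hdD⟩, hord, hext⟩ := exists_ordClosed_eFree_subset hnoc ⟨a, haU⟩
  have hDX : (D : Set Atom) ⊆ X := fun y hy => Finset.mem_of_mem_filter _ (hDU hy)
  have hdfalse : A d = false := hhat D ⟨d, hdD⟩ (hDX.trans hX)
    (hXunf.filter_true.isUnfoundedHat_of_subset hDU hord hext) d hdD
  have hdtrue : A d = true := (Finset.mem_filter.1 (hDU hdD)).2
  simp [hdfalse] at hdtrue

/-- If the atom dependency graph of `Π` has no e-cycle under `→ᵈ` and `Â`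
intersects no nonempty unfounded set of `Π̂` wrt. `Â`, then the complete model
`A` is unfounded-free for `Π`. -/
theorem no_ecycle_unfounded_free (P : Program Atom) (hP : P.Finite)
    (A : Atom → Bool) (hm : isModel A P)
    (hnoc : ¬ hasECycleIn P (Set.univ : Set Atom))
    (hhat : ∀ U : Finset Atom, U.Nonempty → ↑U ⊆ progAtoms P →
      isUnfoundedHat P A U → ∀ a ∈ U, A a = false) :
    ∀ X : Finset Atom, ↑X ⊆ progAtoms P → isUnfounded P A X →
      ∀ a ∈ X, A a = false :=
  no_ecycle_unfounded_free_general P A hnoc hhat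
end

section
/- Call an atom a of a ground HEX-program Π a cyclic input atom iff there is an atom b with b →ₑ a and a path from a to b under →ᵈ = → ∪ →⁻¹ ∪ →ₑ. If U ≠ ∅ is an unfounded set of Π with respect to a complete assignment A and U contains no cyclic input atom, then the guessing program Π̂ has a nonempty unfounded set with respect to the compatible extension Â of A. -/
variable {Atom : Type} [DecidableEq Atom]

/-! Group the atoms of `U` into components under ordinary edges (in either direction) inside `U`,
and let one component point to another when it has an e-edge into it. A cycle of components would
make the target of its first e-edge a cyclic input atom, so by finiteness some component `C` has
no e-edge into `U` at all. For a rule with head in `C`, falsifying `A ∪̇¬ U` and falsifying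
`Â ∪̇¬ C` then agree: its external atoms read no atom of `U`, and the positive body atoms in `U`
lie in `C`. Hence `C` is unfounded for `Π̂`. -/

open Relation

theorem Finset.exists_forall_not_rel_of_acyclic {α : Type*} {R : α → α → Prop} (s : Finset α)
    (hs : s.Nonempty) (hRs : ∀ x y, R x y → y ∈ s) (hacyc : ∀ x, ¬ TransGen R x x) :
    ∃ x ∈ s, ∀ y, ¬ R x y := by
  let r : α → α → Prop := fun x y => TransGen R y x
  have : IsStrictOrder α r :=
    { irrefl := hacyc
      trans := fun _ _ _ hab hbc => hbc.trans hab }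
  obtain ⟨x, hx⟩ := hs
  obtain ⟨⟨m, hm⟩, -, hmin⟩ := (s.wellFoundedOn (r := r)).has_min Set.univ ⟨⟨x, hx⟩, trivial⟩
  exact ⟨m, hm, fun y hy => hmin ⟨y, hRs m y hy⟩ trivial (TransGen.single hy)⟩

section Unplug

variable {A : Atom → Bool} {X : Finset Atom} {a : Atom}

theorem unplug_of_mem (h : a ∈ X) : unplug A X a = false := by
  simp [unplug, h]

theorem unplug_of_notMem (h : a ∉ X) : unplug A X a = A a := by
  simp [unplug, h]

theorem unplug_eq_true_iff : unplug A X a = true ↔ A a = true ∧ a ∉ X := by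
  simp [unplug]

theorem ExtAtom.eval_unplug (e : ExtAtom Atom) (h : ∀ a ∈ e.inputs, a ∉ X) :
    e.eval (unplug A X) = e.eval A :=
  e.dep _ _ fun a ha => unplug_of_notMem (h a ha)

end Unplug

theorem Rule.bodyFalseHat_of_bodyFalseAt_unplug {r : Rule Atom} {A : Atom → Bool}
    {U C : Finset Atom} (hCU : C ⊆ U) (hpos : ∀ a ∈ r.posOrd, a ∈ U → a ∈ C)
    (hext : ∀ e ∈ r.posExt ++ r.negExt, ∀ a ∈ e.inputs, a ∉ U)
    (hf : r.bodyFalseAt (unplug A U)) :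
    r.bodyFalseHat A A ∨ r.bodyFalseHat A (unplug A C) := by
  rcases hf with ⟨a, ha, hfa⟩ | ⟨a, ha, hta⟩ | ⟨e, he, hfe⟩ | ⟨e, he, hte⟩
  · by_cases haU : a ∈ U
    · exact .inr (.inl ⟨a, ha, unplug_of_mem (hpos a ha haU)⟩)
    · exact .inl (.inl ⟨a, ha, by rwa [unplug_of_notMem haU] at hfa⟩)
  · obtain ⟨hAa, haU⟩ := unplug_eq_true_iff.mp hta
    exact .inr (.inr (.inl ⟨a, ha, unplug_eq_true_iff.mpr ⟨hAa, fun haC => haU (hCU haC)⟩⟩))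
  · rw [e.eval_unplug (hext e (List.mem_append_left _ he))] at hfe
    exact .inl (.inr (.inr (.inl ⟨e, he, hfe⟩)))
  · rw [e.eval_unplug (hext e (List.mem_append_right _ he))] at hte
    exact .inl (.inr (.inr (.inr ⟨e, he, hte⟩)))

theorem isUnfoundedHat_of_isUnfounded {P : Program Atom} {A : Atom → Bool} {U C : Finset Atom}
    (hU : isUnfounded P A U) (hCU : C ⊆ U)
    (hord : ∀ a ∈ C, ∀ b ∈ U, ordDep P a b → b ∈ C)
    (hext : ∀ a ∈ C, ∀ b ∈ U, ¬ eDep P a b) :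
    isUnfoundedHat P A C := by
  rintro r hr ⟨h, hh⟩
  obtain ⟨hhead, hhC⟩ := Finset.mem_inter.mp hh
  rcases hU r hr ⟨h, Finset.mem_inter.mpr ⟨hhead, hCU hhC⟩⟩
    with hf | hf | ⟨h', hh', hh'U, hAh'⟩
  · exact .inl hf
  · refine .imp_right .inl (r.bodyFalseHat_of_bodyFalseAt_unplug hCU ?_ ?_ hf)
    · exact fun a ha haU => hord h hhC a haU ⟨r, hr, hhead, ha⟩
    · exact fun e he a ha haU => hext h hhC a haU ⟨r, hr, hhead, e, he, ha⟩
  · exact .inr (.inr ⟨h', hh', fun hC => hh'U (hCU hC), hAh'⟩)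

section Components

omit [DecidableEq Atom]

variable (P : Program Atom) (U : Finset Atom)

def ordLinkIn (a b : Atom) : Prop :=
  a ∈ U ∧ b ∈ U ∧ (ordDep P a b ∨ ordDep P b a)

open scoped Classical in
noncomputable def ordComponent (a : Atom) : Finset Atom :=
  U.filter (ReflTransGen (ordLinkIn P U) a)

def componentEDep (a b : Atom) : Prop :=
  b ∈ U ∧ ∃ h, ReflTransGen (ordLinkIn P U) a h ∧ eDep P h b

variable {P U}

theorem mem_ordComponent {a b : Atom} :
    b ∈ ordComponent P U a ↔ b ∈ U ∧ ReflTransGen (ordLinkIn P U) a b := by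
  classical
  simp [ordComponent]

theorem ordComponent_subset (a : Atom) : ordComponent P U a ⊆ U :=
  fun _ hb => (mem_ordComponent.mp hb).1

theorem reflTransGen_dDep_of_ordLinkIn {a b : Atom} (h : ReflTransGen (ordLinkIn P U) a b) :
    ReflTransGen (dDep P) a b :=
  ReflTransGen.mono (fun _ _ hxy => hxy.2.2.elim Or.inl (Or.inr ∘ Or.inl)) _ _ h

theorem reflTransGen_dDep_of_componentEDep {a b : Atom}
    (h : ReflTransGen (componentEDep P U) a b) : ReflTransGen (dDep P) a b :=
  reflTransGen_closed (fun _ _ ⟨_, _, hac, hcb⟩ =>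
    (reflTransGen_dDep_of_ordLinkIn hac).tail (.inr (.inr hcb))) _ _ h

theorem exists_cyclicInput_of_transGen_componentEDep {a : Atom}
    (h : TransGen (componentEDep P U) a a) : ∃ b ∈ U, cyclicInput P b := by
  obtain ⟨b, ⟨hbU, c, hac, hcb⟩, hba⟩ := TransGen.head'_iff.mp h
  exact ⟨b, hbU, c, hcb,
    (reflTransGen_dDep_of_componentEDep hba).trans (reflTransGen_dDep_of_ordLinkIn hac)⟩

theorem exists_forall_not_componentEDep (hne : U.Nonempty)
    (hnoca : ∀ a ∈ U, ¬ cyclicInput P a) : ∃ a ∈ U, ∀ b, ¬ componentEDep P U a b :=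
  U.exists_forall_not_rel_of_acyclic hne (fun _ _ h => h.1) fun _ h =>
    let ⟨b, hbU, hb⟩ := exists_cyclicInput_of_transGen_componentEDep h
    hnoca b hbU hb

end Components

theorem isUnfoundedHat_ordComponent {P : Program Atom} {U : Finset Atom} {A : Atom → Bool}
    {a : Atom} (hU : isUnfounded P A U) (ha : ∀ b, ¬ componentEDep P U a b) :
    isUnfoundedHat P A (ordComponent P U a) := by
  refine isUnfoundedHat_of_isUnfounded hU (ordComponent_subset a) ?_ ?_
  · intro x hx y hyU hxy
    obtain ⟨hxU, hax⟩ := mem_ordComponent.mp hx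
    exact mem_ordComponent.mpr ⟨hyU, hax.tail ⟨hxU, hyU, .inl hxy⟩⟩
  · exact fun x hx y hyU hxy => ha y ⟨hyU, x, (mem_ordComponent.mp hx).2, hxy⟩

theorem cyclic_input_unfoundedness_general (P : Program Atom)
    (A : Atom → Bool) (U : Finset Atom) (hne : U.Nonempty)
    (hUatoms : ↑U ⊆ progAtoms P)
    (hU : isUnfounded P A U)
    (hnoca : ∀ a ∈ U, ¬ cyclicInput P a) :
    ∃ U' : Finset Atom, U'.Nonempty ∧ ↑U' ⊆ progAtoms P ∧
      isUnfoundedHat P A U' := by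
  obtain ⟨a, haU, ha⟩ := exists_forall_not_componentEDep hne hnoca
  refine ⟨ordComponent P U a, ⟨a, mem_ordComponent.mpr ⟨haU, .refl⟩⟩, ?_,
    isUnfoundedHat_ordComponent hU ha⟩
  exact (Finset.coe_subset.mpr (ordComponent_subset a)).trans hUatoms

/-- Unfoundedness of Cyclic Input Atoms: if a nonempty unfounded set `U` of
`Π` wrt. `A` contains no cyclic input atom, then `Π̂` has a nonempty unfounded
set wrt. `Â`. -/
theorem cyclic_input_unfoundedness (P : Program Atom) (hP : P.Finite)
    (A : Atom → Bool) (U : Finset Atom) (hne : U.Nonempty)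
    (hUatoms : ↑U ⊆ progAtoms P)
    (hU : isUnfounded P A U)
    (hnoca : ∀ a ∈ U, ¬ cyclicInput P a) :
    ∃ U' : Finset Atom, U'.Nonempty ∧ ↑U' ⊆ progAtoms P ∧
      isUnfoundedHat P A U' :=
  cyclic_input_unfoundedness_general P A U hne hUatoms hU hnoca
end

section
/- Let Π be a ground HEX-program, 𝒞 the partition of its ordinary atoms into strongly connected components under → ∪ →ₑ, C ∈ 𝒞, and Π_C = { r ∈ Π | H(r) ∩ C ≠ ∅ }. If U is an unfounded set of Π_C with respect to a complete assignment A such that U ⊆ C, then U is an unfounded set of Π with respect to A. -/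
variable {Atom : Type} [DecidableEq Atom]

theorem isUnfounded.of_forall_head_inter_nonempty {P Q : Program Atom} {A : Atom → Bool}
    {U : Finset Atom} (hPQ : ∀ r ∈ P, (r.head ∩ U).Nonempty → r ∈ Q)
    (hU : isUnfounded Q A U) : isUnfounded P A U :=
  fun r hr hne => hU r (hPQ r hr hne) hne

theorem mem_subprog_of_head_inter_nonempty {P : Program Atom} {C : Set Atom}
    {U : Finset Atom} (hUC : ↑U ⊆ C) {r : Rule Atom} (hr : r ∈ P)
    (hne : (r.head ∩ U).Nonempty) : r ∈ subprog P C := by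
  obtain ⟨h, hh⟩ := hne
  rw [Finset.mem_inter] at hh
  exact ⟨hr, h, hh.1, hUC hh.2⟩

theorem component_ufs_is_global_ufs_general (P : Program Atom)
    (A : Atom → Bool) (C : Set Atom)
    (U : Finset Atom) (hUC : ↑U ⊆ C)
    (hU : isUnfounded (subprog P C) A U) :
    isUnfounded P A U :=
  hU.of_forall_head_inter_nonempty fun _ hr => mem_subprog_of_head_inter_nonempty hUC hr

/-- No spurious unfounded sets from splitting: an unfounded set of `Π_C` wrt.
`A` contained in the component `C` is an unfounded set of `Π` wrt. `A`. -/
theorem component_ufs_is_global_ufs (P : Program Atom) (hP : P.Finite)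
    (A : Atom → Bool) (a : Atom) (C : Set Atom) (hC : C = scc P a)
    (U : Finset Atom) (hUC : ↑U ⊆ C)
    (hU : isUnfounded (subprog P C) A U) :
    isUnfounded P A U :=
  component_ufs_is_global_ufs_general P A C U hUC hU
end

section
/- Let Π be a ground HEX-program, A a complete model of Π, Π̂ the guessing program of Π, Â the compatible extension of A, and CA(Π) the set of cyclic input atoms of Π. If Π̂ has no nonempty unfounded set wrt. Â, then every nonempty unfounded set U of Π wrt. A satisfies U ∩ CA(Π) ≠ ∅, i.e. the nogood { Fa | a ∈ CA(Π) } is sound for unfounded-set search. -/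
variable {Atom : Type} [DecidableEq Atom]

/-- Soundness of the cyclic-input-atom nogood: if `Π̂` has no nonempty
unfounded set wrt. `Â`, then every nonempty unfounded set of `Π` wrt. the
complete model `A` contains a cyclic input atom, i.e., intersects `CA(Π)`. -/
theorem cyclic_input_nogood_sound (P : Program Atom) (hP : P.Finite)
    (A : Atom → Bool) (hm : isModel A P)
    (hnohat : ¬ ∃ U' : Finset Atom, U'.Nonempty ∧ ↑U' ⊆ progAtoms P ∧
      isUnfoundedHat P A U') :
    ∀ U : Finset Atom, U.Nonempty → ↑U ⊆ progAtoms P → isUnfounded P A U →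
      ∃ a ∈ U, cyclicInput P a := by
  intro U hUne hUsub hU
  by_contra hno
  push_neg at hno
  classical
  -- reachability within U under dep
  let R' : Atom → Atom → Prop := fun x y => x ∈ U ∧ y ∈ U ∧ dep P x y
  let reach : Atom → Finset Atom :=
    fun a => U.filter (fun y => Relation.ReflTransGen R' a y)
  obtain ⟨a₀, ha₀U, hmin⟩ := U.exists_min_image (fun a => (reach a).card) hUne
  have ha₀C : a₀ ∈ reach a₀ := Finset.mem_filter.2 ⟨ha₀U, Relation.ReflTransGen.refl⟩
  have hCsubU : reach a₀ ⊆ U := Finset.filter_subset _ _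
  have hclosure : ∀ h ∈ reach a₀, ∀ y ∈ U, dep P h y → y ∈ reach a₀ := by
    intro h hh y hyU hdep
    obtain ⟨hhU, hpath⟩ := Finset.mem_filter.1 hh
    exact Finset.mem_filter.2 ⟨hyU, hpath.tail ⟨hhU, hyU, hdep⟩⟩
  have hreacheq : ∀ b ∈ reach a₀, reach b = reach a₀ := by
    intro b hb
    obtain ⟨hbU, hpathb⟩ := Finset.mem_filter.1 hb
    have hsub : reach b ⊆ reach a₀ := by
      intro y hy
      obtain ⟨hyU, hp⟩ := Finset.mem_filter.1 hy
      exact Finset.mem_filter.2 ⟨hyU, hpathb.trans hp⟩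
    exact Finset.eq_of_subset_of_card_le hsub (hmin b hbU)
  -- no e-edge from C into U (else a cyclic input atom in U)
  have hnoE : ∀ h ∈ reach a₀, ∀ b, b ∈ U → ¬ eDep P h b := by
    intro h hh b hbU he
    have hbC : b ∈ reach a₀ := hclosure h hh b hbU (Or.inr he)
    have hhb : h ∈ reach b := (hreacheq b hbC).symm ▸ hh
    have hp : Relation.ReflTransGen R' b h := (Finset.mem_filter.1 hhb).2
    have hp' : Relation.ReflTransGen (dDep P) b h :=
      Relation.ReflTransGen.mono (fun x y (hxy : R' x y) => hxy.2.2.elim (fun h => Or.inl h)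
        (fun h => Or.inr (Or.inr h))) b h hp
    exact hno b hbU ⟨h, he, hp'⟩
  -- C := reach a₀ is a nonempty unfounded set of the guessing program
  apply hnohat
  refine ⟨reach a₀, ⟨a₀, ha₀C⟩, ?_, ?_⟩
  · intro x hx
    exact hUsub (hCsubU hx)
  · intro r hrP hne
    obtain ⟨h, hh⟩ := hne
    rw [Finset.mem_inter] at hh
    obtain ⟨hhhead, hhC⟩ := hh
    have hheadU : (r.head ∩ U).Nonempty :=
      ⟨h, Finset.mem_inter.2 ⟨hhhead, hCsubU hhC⟩⟩
    rcases hU r hrP hheadU with hc | hc | hc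
    · exact Or.inl hc
    · refine Or.inr (Or.inl ?_)
      rcases hc with ⟨a, haB, hav⟩ | ⟨a, haB, hav⟩ | ⟨e, heB, hev⟩ | ⟨e, heB, hev⟩
      · -- positive ordinary body atom false under unplug A U
        left; refine ⟨a, haB, ?_⟩
        by_cases haU : a ∈ U
        · have haC : a ∈ reach a₀ :=
            hclosure h hhC a haU (Or.inl ⟨r, hrP, hhhead, haB⟩)
          simp [unplug, haC]
        · have hAa : A a = false := by simpa [unplug, haU] using hav
          simp [unplug, hAa]
      · -- negative ordinary body atom true under unplug A U
        right; left; refine ⟨a, haB, ?_⟩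
        have h1 : A a = true ∧ a ∉ U := by simpa [unplug] using hav
        have h2 : a ∉ reach a₀ := fun hc2 => h1.2 (hCsubU hc2)
        simp [unplug, h1.1, h2]
      · -- positive external atom false under unplug A U
        right; right; left
        have hinputs : ∀ b ∈ e.inputs, unplug A U b = A b := by
          intro b hb
          have hbe : eDep P h b :=
            ⟨r, hrP, hhhead, e, List.mem_append.2 (Or.inl heB), hb⟩
          have hbnU : b ∉ U := fun hbU => hnoE h hhC b hbU hbe
          simp [unplug, hbnU]
        have heq := e.dep (unplug A U) A hinputs
        exact ⟨e, heB, by rw [← heq]; exact hev⟩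
      · -- negative external atom true under unplug A U
        right; right; right
        have hinputs : ∀ b ∈ e.inputs, unplug A U b = A b := by
          intro b hb
          have hbe : eDep P h b :=
            ⟨r, hrP, hhhead, e, List.mem_append.2 (Or.inr heB), hb⟩
          have hbnU : b ∉ U := fun hbU => hnoE h hhC b hbU hbe
          simp [unplug, hbnU]
        have heq := e.dep (unplug A U) A hinputs
        exact ⟨e, heB, by rw [← heq]; exact hev⟩
    · obtain ⟨h', hh', hnU, hA⟩ := hc
      exact Or.inr (Or.inr ⟨h', hh', fun hc2 => hnU (hCsubU hc2), hA⟩)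
end

section
/- Let Π be a ground HEX-program and A a complete model of Π. A is an answer set of Π (a ≤_Π-minimal model of the FLP-reduct fΠ^A) if and only if A is unfounded-free, i.e., Aᵀ ∩ X = ∅ for every unfounded set X of Π wrt. A. -/
variable {Atom : Type} [DecidableEq Atom]

/-!
Both directions compare `A` with the assignment `A ∪̇¬ X` obtained by falsifying `X`.
If `X` is unfounded, then every rule of the FLP-reduct whose head meets `X` either has its body
falsified by `A ∪̇¬ X` or keeps a true head atom outside `X`; so `A ∪̇¬ X` is a model of `fΠ^A`
below `A`, and minimality forces `Aᵀ ∩ X = ∅`. Conversely, a model `A' ≤_Π A` of `fΠ^A` coincides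
on `A(Π)` with `A ∪̇¬ X` for the finite set `X` of atoms that `A'` falsifies and `A` does not.
Since external atoms only read their inputs, a rule of `Π` whose body is true in both `A` and
`A ∪̇¬ X` lies in `fΠ^A` and has its body true in `A'`, hence a head atom true in `A'`, that is,
true in `A` and outside `X`; so `X` is unfounded.
-/

namespace Rule

theorem mem_foldr_inputs_iff {l : List (ExtAtom Atom)} {a : Atom} :
    a ∈ l.foldr (fun e s => e.inputs ∪ s) ∅ ↔ ∃ e ∈ l, a ∈ e.inputs := by
  induction l with
  | nil => simp
  | cons e l ih => simp [ih]

theorem mem_atoms {r : Rule Atom} {a : Atom} :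
    a ∈ r.atoms ↔ a ∈ r.head ∨ a ∈ r.posOrd ∨ a ∈ r.negOrd ∨
      ∃ e ∈ r.posExt ++ r.negExt, a ∈ e.inputs := by
  simp only [atoms, Finset.mem_union, mem_foldr_inputs_iff, or_assoc]

theorem not_bodyFalseAt_iff {Atom : Type} {r : Rule Atom} {B : Atom → Bool} :
    ¬ r.bodyFalseAt B ↔ r.bodyTrueAt B := by
  simp [bodyFalseAt, bodyTrueAt]

theorem bodyTrueAt_congr {r : Rule Atom} {B B' : Atom → Bool}
    (h : ∀ a ∈ r.atoms, B a = B' a) : r.bodyTrueAt B ↔ r.bodyTrueAt B' := by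
  have hExt : ∀ e ∈ r.posExt ++ r.negExt, e.eval B = e.eval B' := fun e he =>
    e.dep B B' fun a ha => h a (mem_atoms.2 <| .inr <| .inr <| .inr ⟨e, he, ha⟩)
  have hPos : ∀ a ∈ r.posOrd, B a = B' a := fun a ha => h a (mem_atoms.2 <| .inr <| .inl ha)
  have hNeg : ∀ a ∈ r.negOrd, B a = B' a := fun a ha => h a (mem_atoms.2 <| .inr <| .inr <| .inl ha)
  unfold bodyTrueAt
  refine and_congr (forall₂_congr fun a ha => by rw [hPos a ha]) <|
    and_congr (forall₂_congr fun a ha => by rw [hNeg a ha]) <|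
    and_congr (forall₂_congr fun e he => by rw [hExt e (List.mem_append_left _ he)])
      (forall₂_congr fun e he => by rw [hExt e (List.mem_append_right _ he)])

end Rule

theorem progAtoms_finite {P : Program Atom} (hP : P.Finite) : (progAtoms P).Finite :=
  hP.biUnion fun r _ => r.atoms.finite_toSet

theorem leP_unplug (P : Program Atom) (A : Atom → Bool) (X : Finset Atom) :
    leP P (unplug A X) A := fun _ _ h => (Bool.and_eq_true _ _ ▸ h).1

theorem isModel_unplug_flpReduct {P : Program Atom} {A : Atom → Bool} {X : Finset Atom}
    (hm : isModel A P) (hX : isUnfounded P A X) : isModel (unplug A X) (flpReduct P A) := by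
  rintro r ⟨hrP, hbodyA⟩ hbodyX
  by_cases hmeet : (r.head ∩ X).Nonempty
  · obtain hfalse | hfalse | ⟨h, hh, hhX, hAh⟩ := hX r hrP hmeet
    · exact absurd hfalse (Rule.not_bodyFalseAt_iff.2 hbodyA)
    · exact absurd hfalse (Rule.not_bodyFalseAt_iff.2 hbodyX)
    · exact ⟨h, hh, by simp [unplug, hAh, hhX]⟩
  · obtain ⟨h, hh, hAh⟩ := hm r hrP hbodyA
    have hhX : h ∉ X := fun hhX => hmeet ⟨h, Finset.mem_inter.2 ⟨hh, hhX⟩⟩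
    exact ⟨h, hh, by simp [unplug, hAh, hhX]⟩

theorem isUnfounded_of_isModel_flpReduct {P : Program Atom} {A A' : Atom → Bool}
    {X : Finset Atom} (hA' : isModel A' (flpReduct P A))
    (hX : ∀ a ∈ progAtoms P, A' a = unplug A X a) : isUnfounded P A X := by
  intro r hrP _
  by_contra! hnot
  obtain ⟨hbodyA, hbodyX, hhead⟩ := hnot
  have hagree : ∀ a ∈ r.atoms, unplug A X a = A' a := fun a ha =>
    (hX a (Set.mem_biUnion hrP ha)).symm
  have hbodyA' : r.bodyTrueAt A' :=
    (Rule.bodyTrueAt_congr hagree).1 (Rule.not_bodyFalseAt_iff.1 hbodyX)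
  obtain ⟨h, hh, hA'h⟩ := hA' r ⟨hrP, Rule.not_bodyFalseAt_iff.1 hbodyA⟩ hbodyA'
  rw [hX h (Set.mem_biUnion hrP (Rule.mem_atoms.2 (.inl hh)))] at hA'h
  simp only [unplug, Bool.and_eq_true, Bool.not_eq_true', decide_eq_false_iff_not] at hA'h
  exact hhead h hh hA'h.2 hA'h.1

theorem exists_finset_unplug_eq_of_leP {P : Program Atom} (hP : P.Finite) {A A' : Atom → Bool}
    (hle : leP P A' A) :
    ∃ X : Finset Atom, ↑X ⊆ progAtoms P ∧ ∀ a ∈ progAtoms P, A' a = unplug A X a := by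
  classical
  let S := {a ∈ progAtoms P | A a = true ∧ A' a = false}
  have hS : S.Finite := (progAtoms_finite hP).subset fun _ ha => ha.1
  refine ⟨hS.toFinset, fun a ha => (hS.mem_toFinset.1 ha).1, fun a ha => ?_⟩
  have hmem : a ∈ hS.toFinset ↔ A a = true ∧ A' a = false := by
    simp [S, ha]
  cases hAa : A a <;> cases hA'a : A' a <;> simp_all [unplug, hle a ha]

/-- Characterization of answer sets: a complete model `A` of `Π` is an answer
set iff it is unfounded-free, i.e., `Aᵀ` intersects no unfounded set of `Π`
wrt. `A`. -/
theorem answer_set_iff_unfounded_free (P : Program Atom) (hP : P.Finite)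
    (A : Atom → Bool) (hm : isModel A P) :
    isAnswerSet P A ↔
      ∀ X : Finset Atom, ↑X ⊆ progAtoms P → isUnfounded P A X →
        ∀ a ∈ X, A a = false := by
  constructor
  · rintro ⟨-, hmin⟩ X hXP hX a ha
    have hle := hmin _ (isModel_unplug_flpReduct hm hX) (leP_unplug P A X) a (hXP ha)
    simpa [unplug, ha] using mt hle
  · intro hfree
    refine ⟨fun r hr => hm r hr.1, fun A' hA' hle a ha hAa => ?_⟩
    obtain ⟨X, hXP, hX⟩ := exists_finset_unplug_eq_of_leP hP hle
    by_contra hA'a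
    have haX : a ∈ X := by simpa [hX a ha, unplug, hAa] using hA'a
    simp [hfree X hXP (isUnfounded_of_isModel_flpReduct hA' hX) a haX] at hAa
end
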